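/- arXiv:2303.17519 — 4 statements merged into one kernel-verified Lean document; each statement's English description precedes it below -/
import Mathlib

section
/- If A is a Schur stable n×n matrix (all eigenvalues have absolute value strictly less than 1), Σζ solves the Lyapunov equation A Σζ Aᵀ − Σζ + B = 0, and Σ satisfies the Lyapunov inequality A Σ Aᵀ − Σ + B ⪯ 0 (both Σ, Σζ symmetric), then Σ ⪰ Σζ. -/
/-!
Put `D = S - Sζ`. Subtracting the Lyapunov equation from the inequality gives
`D - A D Aᵀ ⪰ 0`, and telescoping this along powers gives `D - Aᵐ D (Aᵐ)ᵀ ⪰ 0` for every `m`.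
By Gelfand's formula a Schur stable matrix has `Aᵐ → 0`, so these matrices tend to `D`, which is
therefore positive semidefinite because the positive semidefinite cone is closed.
-/

open Matrix Filter Topology

theorem spectrum.tendsto_pow_atTop_nhds_zero_of_spectralRadius_lt_one {A : Type*} [NormedRing A]
    [NormedAlgebra ℂ A] [CompleteSpace A] {a : A} (ha : spectralRadius ℂ a < 1) :
    Tendsto (a ^ ·) atTop (𝓝 0) := by
  obtain ⟨r, hρr, hr1⟩ := ENNReal.lt_iff_exists_nnreal_btwn.mp ha
  have hpow_lt : ∀ᶠ m : ℕ in atTop, ‖a ^ m‖₊ < r ^ m := by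
    filter_upwards [(pow_nnnorm_pow_one_div_tendsto_nhds_spectralRadius a).eventually_lt_const hρr,
      eventually_ge_atTop 1] with m hm hm1
    have hm0 : (0 : ℝ) < m := by exact_mod_cast hm1
    have := ENNReal.rpow_lt_rpow hm hm0
    rwa [← ENNReal.rpow_mul, one_div_mul_cancel hm0.ne', ENNReal.rpow_one, ENNReal.rpow_natCast,
      ← ENNReal.coe_pow, ENNReal.coe_lt_coe] at this
  refine squeeze_zero_norm' (hpow_lt.mono fun m hm => ?_)
    (tendsto_pow_atTop_nhds_zero_of_lt_one r.coe_nonneg (by exact_mod_cast hr1))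
  exact_mod_cast hm.le

namespace Matrix

section PosSemidef

variable {n R : Type*} [Fintype n] [Ring R] [PartialOrder R] [StarRing R]

theorem isClosed_setOf_posSemidef [TopologicalSpace R] [IsTopologicalRing R] [ContinuousStar R]
    [T2Space R] [ClosedIciTopology R] :
    IsClosed {M : Matrix n n R | M.PosSemidef} := by
  simp_rw [posSemidef_iff_dotProduct_mulVec, Set.ofPred_and, Set.ofPred_forall]
  exact (isClosed_eq continuous_id.matrix_conjTranspose continuous_id).inter <|
    isClosed_iInter fun x => isClosed_Ici.preimage
      (continuous_const.dotProduct (continuous_id.matrix_mulVec continuous_const))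

variable [DecidableEq n] [AddLeftMono R]

theorem PosSemidef.sub_pow_mul_mul_conjTranspose_pow {A D : Matrix n n R}
    (h : (D - A * D * Aᴴ).PosSemidef) (m : ℕ) : (D - A ^ m * D * (A ^ m)ᴴ).PosSemidef := by
  induction m with
  | zero => simpa using PosSemidef.zero
  | succ m ih =>
    have hsplit : D - A ^ (m + 1) * D * (A ^ (m + 1))ᴴ =
        (D - A * D * Aᴴ) + A * (D - A ^ m * D * (A ^ m)ᴴ) * Aᴴ := by
      rw [pow_succ', conjTranspose_mul]
      noncomm_ring
    rw [hsplit]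
    exact h.add (ih.mul_mul_conjTranspose_same A)

theorem posSemidef_of_sub_mul_mul_conjTranspose_posSemidef [TopologicalSpace R]
    [IsTopologicalRing R] [ContinuousStar R] [T2Space R] [ClosedIciTopology R] {A D : Matrix n n R}
    (hA : Tendsto (A ^ ·) atTop (𝓝 0)) (h : (D - A * D * Aᴴ).PosSemidef) : D.PosSemidef := by
  have hcont : Continuous fun M : Matrix n n R => D - M * D * Mᴴ :=
    continuous_const.sub ((continuous_id.matrix_mul continuous_const).matrix_mul
      continuous_id.matrix_conjTranspose)
  have hlim : Tendsto (fun m : ℕ => D - A ^ m * D * (A ^ m)ᴴ) atTop (𝓝 D) := by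
    have := (hcont.tendsto 0).comp hA
    rwa [zero_mul, zero_mul, sub_zero] at this
  exact isClosed_setOf_posSemidef.mem_of_tendsto hlim
    (.of_forall h.sub_pow_mul_mul_conjTranspose_pow)

end PosSemidef

section SchurStable

attribute [local instance] Matrix.linftyOpNormedAddCommGroup Matrix.linftyOpNormedRing
  Matrix.linftyOpNormedAlgebra

theorem tendsto_pow_atTop_nhds_zero_of_forall_norm_lt_one {n : Type*} [Fintype n]
    [DecidableEq n] {A : Matrix n n ℝ} (hA : ∀ μ ∈ spectrum ℂ (A.map Complex.ofReal), ‖μ‖ < 1) :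
    Tendsto (A ^ ·) atTop (𝓝 0) := by
  -- `spectralRadius_lt_of_forall_lt` needs a nontrivial algebra, so the empty index type is apart.
  rcases isEmpty_or_nonempty n with _ | _
  · exact tendsto_const_nhds.congr fun m => Subsingleton.elim _ _
  have hρ : spectralRadius ℂ (A.map Complex.ofReal) < 1 := by
    simpa using spectrum.spectralRadius_lt_of_forall_lt (A.map Complex.ofReal) (r := 1)
      fun z hz => by simpa [← NNReal.coe_lt_coe] using hA z hz
  have := ((continuous_id.matrix_map Complex.continuous_re).tendsto 0).comp
    (spectrum.tendsto_pow_atTop_nhds_zero_of_spectralRadius_lt_one hρ)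
  convert this using 2 with m
  · have hmap : (A.map Complex.ofReal) ^ m = (A ^ m).map Complex.ofReal :=
      (map_pow Complex.ofRealHom.mapMatrix A m).symm
    simp [hmap, Function.comp_def]
  · simp

end SchurStable

end Matrix

theorem stmt_1_general {n : ℕ} (A B Sζ S : Matrix (Fin n) (Fin n) ℝ)
    (hA : ∀ μ ∈ spectrum ℂ (A.map (Complex.ofReal)), ‖μ‖ < 1)
    (heq : A * Sζ * Aᵀ - Sζ + B = 0)
    (hineq : (-(A * S * Aᵀ - S + B)).PosSemidef) :
    (S - Sζ).PosSemidef := by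
  refine posSemidef_of_sub_mul_mul_conjTranspose_posSemidef
    (tendsto_pow_atTop_nhds_zero_of_forall_norm_lt_one hA) ?_
  have hLyapunov : A * Sζ * Aᵀ = Sζ - B := by rwa [sub_add, sub_eq_zero] at heq
  convert hineq using 1
  rw [conjTranspose_eq_transpose_of_trivial, mul_sub, sub_mul, hLyapunov]
  abel

/-- If `A` is Schur stable, `Sζ` solves the Lyapunov equation `A Sζ Aᵀ − Sζ + B = 0`,
and `S` satisfies the Lyapunov inequality `A S Aᵀ − S + B ⪯ 0` (both symmetric),
then `S ⪰ Sζ`. -/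
theorem stmt_1 {n : ℕ} (A B Sζ S : Matrix (Fin n) (Fin n) ℝ)
    (hA : ∀ μ ∈ spectrum ℂ (A.map (Complex.ofReal)), ‖μ‖ < 1)
    (hB : B.IsHermitian) (hSζ : Sζ.IsHermitian) (hS : S.IsHermitian)
    (heq : A * Sζ * Aᵀ - Sζ + B = 0)
    (hineq : (-(A * S * Aᵀ - S + B)).PosSemidef) :
    (S - Sζ).PosSemidef :=
  stmt_1_general A B Sζ S hA heq hineq
end

section
/- Let A be Schur stable, B symmetric positive semidefinite, and suppose Σ is symmetric with A Σ Aᵀ − Σ + B ⪯ 0. If Σζ = Σ_{k=0}^∞ A^k B (Aᵀ)^k is the unique solution of the Lyapunov equation, then for any matrices N (of compatible dimensions), N Σ Nᵀ ⪰ N Σζ Nᵀ. -/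
/-!
Telescoping `A ^ k * S * Aᵀ ^ k` shows that `S - Sζ` is the sum of the series
`∑ A ^ k * C * Aᵀ ^ k` with `C = -(A * S * Aᵀ - S + B) ⪰ 0`, so it is a limit of positive
semidefinite matrices, and congruence by `N` preserves this. All the series converge because
Gelfand's formula makes `‖A ^ k‖` decay geometrically once the spectral radius is below one.
-/

open Matrix Filter
open scoped NNReal

section BanachAlgebra

variable {𝔸 : Type*} [NormedRing 𝔸] [NormedAlgebra ℂ 𝔸] [CompleteSpace 𝔸]

theorem spectrum.spectralRadius_lt_one_of_forall_norm_lt_one {a : 𝔸}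
    (ha : ∀ μ ∈ spectrum ℂ a, ‖μ‖ < 1) : spectralRadius ℂ a < 1 := by
  rcases (spectrum ℂ a).eq_empty_or_nonempty with h | h
  · simp [spectralRadius, h]
  · simpa using spectrum.spectralRadius_lt_of_forall_lt_of_nonempty h (r := 1)
      fun μ hμ => by exact_mod_cast ha μ hμ

theorem spectrum.eventually_nnnorm_pow_le_of_spectralRadius_lt {a : 𝔸} {r : ℝ≥0}
    (hr : spectralRadius ℂ a < r) : ∀ᶠ k : ℕ in atTop, ‖a ^ k‖₊ ≤ r ^ k := by
  filter_upwards [(pow_nnnorm_pow_one_div_tendsto_nhds_spectralRadius a).eventually_lt_const hr,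
    eventually_gt_atTop 0] with k hk hk0
  rw [one_div, ENNReal.rpow_inv_lt_iff (by positivity), ENNReal.rpow_natCast] at hk
  exact_mod_cast hk.le

theorem spectrum.summable_norm_pow_sq_of_spectralRadius_lt_one {a : 𝔸}
    (ha : spectralRadius ℂ a < 1) : Summable fun k : ℕ => ‖a ^ k‖ ^ 2 := by
  obtain ⟨r, har, hr⟩ := ENNReal.lt_iff_exists_nnreal_btwn.mp ha
  have hr_sq : (r : ℝ) ^ 2 < 1 := by
    have : (r : ℝ) < 1 := by exact_mod_cast hr
    nlinarith [r.coe_nonneg]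
  refine Summable.of_norm_bounded_eventually_nat
    (summable_geometric_of_lt_one (by positivity) hr_sq) ?_
  filter_upwards [eventually_nnnorm_pow_le_of_spectralRadius_lt har] with k hk
  have hk : ‖a ^ k‖ ≤ (r : ℝ) ^ k := by exact_mod_cast hk
  rw [norm_pow, Real.norm_of_nonneg (norm_nonneg _), ← pow_mul, mul_comm, pow_mul]
  gcongr

end BanachAlgebra

namespace Matrix

variable {ι : Type*} [Fintype ι]

theorem PosSemidef.of_hasSum {f : ℕ → Matrix ι ι ℝ} {D : Matrix ι ι ℝ} (hf : HasSum f D)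
    (h : ∀ k, (f k).PosSemidef) : D.PosSemidef := by
  refine PosSemidef.of_dotProduct_mulVec_nonneg ?_ fun x => ?_
  · have hf' := hf.matrix_conjTranspose
    simp only [(h _).isHermitian.eq] at hf'
    exact hf'.unique hf
  · let q : Matrix ι ι ℝ →ₗ[ℝ] ℝ :=
      { toFun := fun M => star x ⬝ᵥ M *ᵥ x
        map_add' := fun M N => by simp [add_mulVec, dotProduct_add]
        map_smul' := fun c M => by simp [smul_mulVec, dotProduct_smul] }
    exact hasSum_le (fun k => (h k).dotProduct_mulVec_nonneg x) hasSum_zero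
      (hf.mapL q.toContinuousLinearMap)

variable [DecidableEq ι]

section Frobenius

attribute [local instance] frobeniusNormedAddCommGroup frobeniusNormedSpace frobeniusNormedRing
  frobeniusNormedAlgebra

theorem summable_norm_pow_sq_of_spectrum_map_ofReal {A : Matrix ι ι ℝ}
    (hA : ∀ μ ∈ spectrum ℂ (A.map Complex.ofReal), ‖μ‖ < 1) :
    Summable fun k : ℕ => ‖A ^ k‖ ^ 2 := by
  have hmap (k : ℕ) : (A.map Complex.ofReal) ^ k = (A ^ k).map Complex.ofReal :=
    (map_pow (Complex.ofRealHom.mapMatrix : Matrix ι ι ℝ →+* _) A k).symm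
  simpa only [hmap, frobenius_norm_map_eq _ _ Complex.norm_real] using
    spectrum.summable_norm_pow_sq_of_spectralRadius_lt_one
      (spectrum.spectralRadius_lt_one_of_forall_norm_lt_one hA)

theorem norm_pow_mul_mul_transpose_pow_le (A M : Matrix ι ι ℝ) (k : ℕ) :
    ‖A ^ k * M * Aᵀ ^ k‖ ≤ ‖M‖ * ‖A ^ k‖ ^ 2 :=
  calc ‖A ^ k * M * Aᵀ ^ k‖ ≤ ‖A ^ k‖ * ‖M‖ * ‖Aᵀ ^ k‖ := norm_mul₃_le
    _ = ‖M‖ * ‖A ^ k‖ ^ 2 := by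
      rw [← transpose_pow, frobenius_norm_transpose]; ring

theorem summable_pow_mul_mul_transpose_pow {A : Matrix ι ι ℝ}
    (hA : ∀ μ ∈ spectrum ℂ (A.map Complex.ofReal), ‖μ‖ < 1) (M : Matrix ι ι ℝ) :
    Summable fun k : ℕ => A ^ k * M * Aᵀ ^ k :=
  .of_norm_bounded ((summable_norm_pow_sq_of_spectrum_map_ofReal hA).mul_left ‖M‖)
    (norm_pow_mul_mul_transpose_pow_le A M)

end Frobenius

theorem hasSum_pow_mul_sub_mul_mul_transpose_pow {A : Matrix ι ι ℝ}
    (hA : ∀ μ ∈ spectrum ℂ (A.map Complex.ofReal), ‖μ‖ < 1) (Y : Matrix ι ι ℝ) :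
    HasSum (fun k : ℕ => A ^ k * (Y - A * Y * Aᵀ) * Aᵀ ^ k) Y := by
  set f : ℕ → Matrix ι ι ℝ := fun k => A ^ k * Y * Aᵀ ^ k
  have hterm (k : ℕ) : A ^ k * (Y - A * Y * Aᵀ) * Aᵀ ^ k = f k - f (k + 1) := by
    simp only [f, pow_succ A, pow_succ' Aᵀ, mul_sub, sub_mul, Matrix.mul_assoc]
  have hf : HasSum f (∑' k, f k) := (summable_pow_mul_mul_transpose_pow hA Y).hasSum
  have hshift : HasSum (fun k => f (k + 1)) (∑' k, f k - f 0) := by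
    simpa using (hasSum_nat_add_iff' 1).mpr hf
  simpa [hterm, f] using hf.sub hshift

end Matrix

theorem stmt_7_general {n p : ℕ} (A B S : Matrix (Fin n) (Fin n) ℝ)
    (hA : ∀ μ ∈ spectrum ℂ (A.map (Complex.ofReal)), ‖μ‖ < 1)
    (hineq : (-(A * S * Aᵀ - S + B)).PosSemidef)
    (Sζ : Matrix (Fin n) (Fin n) ℝ) (hSζ : Sζ = ∑' k : ℕ, A ^ k * B * (Aᵀ) ^ k)
    (N : Matrix (Fin p) (Fin n) ℝ) :
    (N * S * Nᵀ - N * Sζ * Nᵀ).PosSemidef := by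
  have hSum : HasSum (fun k : ℕ => A ^ k * -(A * S * Aᵀ - S + B) * Aᵀ ^ k) (S - Sζ) := by
    have hB : HasSum (fun k : ℕ => A ^ k * B * Aᵀ ^ k) Sζ :=
      hSζ ▸ (summable_pow_mul_mul_transpose_pow hA B).hasSum
    have hterm (k : ℕ) : A ^ k * -(A * S * Aᵀ - S + B) * Aᵀ ^ k
        = A ^ k * (S - A * S * Aᵀ) * Aᵀ ^ k - A ^ k * B * Aᵀ ^ k := by
      rw [← Matrix.sub_mul, ← Matrix.mul_sub]
      abel_nf
    simpa only [hterm] using (hasSum_pow_mul_sub_mul_mul_transpose_pow hA S).sub hB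
  have hdiff : (S - Sζ).PosSemidef := PosSemidef.of_hasSum hSum fun k => by
    simpa only [conjTranspose_eq_transpose_of_trivial, transpose_pow] using
      hineq.mul_mul_conjTranspose_same (A ^ k)
  simpa only [conjTranspose_eq_transpose_of_trivial, Matrix.mul_sub, Matrix.sub_mul] using
    hdiff.mul_mul_conjTranspose_same N

/-- Bound propagation: if `A` is Schur stable, `B ⪰ 0`, `S` is symmetric with
`A S Aᵀ − S + B ⪯ 0`, and `Sζ = ∑_{k≥0} A^k B (Aᵀ)^k` is the solution of the Lyapunov
equation, then `N S Nᵀ ⪰ N Sζ Nᵀ` for any compatible `N`. -/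
theorem stmt_7 {n p : ℕ} (A B S : Matrix (Fin n) (Fin n) ℝ)
    (hA : ∀ μ ∈ spectrum ℂ (A.map (Complex.ofReal)), ‖μ‖ < 1)
    (hB : B.PosSemidef) (hS : S.IsHermitian)
    (hineq : (-(A * S * Aᵀ - S + B)).PosSemidef)
    (Sζ : Matrix (Fin n) (Fin n) ℝ) (hSζ : Sζ = ∑' k : ℕ, A ^ k * B * (Aᵀ) ^ k)
    (N : Matrix (Fin p) (Fin n) ℝ) :
    (N * S * Nᵀ - N * Sζ * Nᵀ).PosSemidef :=
  stmt_7_general A B S hA hineq Sζ hSζ N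
end

section
/- Let Σʰ be symmetric positive definite and Π₁₃ a square matrix such that Π₁₃ + Π₁₃ᵀ − Σʰ is positive semidefinite and Π₁₃ is invertible. If the block matrix [[Σ̃ᵛ, Π₂₁], [Π₂₁ᵀ, Π₁₃ + Π₁₃ᵀ − Σʰ]] is positive semidefinite with Σ̃ᵛ symmetric, then, setting G = Π₂₁ Π₁₃⁻¹, the matrix Σ̃ᵛ − G Σʰ Gᵀ is positive semidefinite. -/
open Matrix

set_option maxHeartbeats 2000000 in
/-- Sufficiency of the linearized constraint: if `Sh ≻ 0`, `P13 + P13ᵀ − Sh ⪰ 0`, `P13`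
is invertible, and `[[Sv, P21], [P21ᵀ, P13 + P13ᵀ − Sh]] ⪰ 0` with `Sv` symmetric, then,
with `G = P21 P13⁻¹`, the matrix `Sv − G Sh Gᵀ` is positive semidefinite.
(`P13`, `P21` play the roles of `Π₁₃`, `Π₂₁`.) -/
theorem stmt_11 {n : ℕ} (Sv Sh P13 P21 : Matrix (Fin n) (Fin n) ℝ)
    (hSv : Sv.IsHermitian) (hSh : Sh.PosDef)
    (hgap : (P13 + P13ᵀ - Sh).PosSemidef) (hP13 : IsUnit P13)
    (hblk : (fromBlocks Sv P21 P21ᵀ (P13 + P13ᵀ - Sh)).PosSemidef) :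
    (Sv - (P21 * P13⁻¹) * Sh * (P21 * P13⁻¹)ᵀ).PosSemidef := by
  have hdet : IsUnit P13.det := (Matrix.isUnit_iff_isUnit_det P13).mp hP13
  have hP1 : P13⁻¹ * P13 = 1 := Matrix.nonsing_inv_mul P13 hdet
  have hP2 : P13 * P13⁻¹ = 1 := Matrix.mul_nonsing_inv P13 hdet
  have hPT1 : P13⁻¹ᵀ * P13ᵀ = 1 := by rw [← Matrix.transpose_mul, hP2, Matrix.transpose_one]
  have hPT2 : P13ᵀ * P13⁻¹ᵀ = 1 := by rw [← Matrix.transpose_mul, hP1, Matrix.transpose_one]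
  have hSt : Shᵀ = Sh := by
    have := hSh.isHermitian.eq
    simpa [Matrix.conjTranspose_eq_transpose_of_trivial] using this
  have hSdet : IsUnit Sh.det := isUnit_iff_ne_zero.mpr (ne_of_gt hSh.det_pos)
  have hS1 : Sh⁻¹ * Sh = 1 := Matrix.nonsing_inv_mul Sh hSdet
  have hS2 : Sh * Sh⁻¹ = 1 := Matrix.mul_nonsing_inv Sh hSdet
  -- right-assoc cancellation rules
  have hP1' : ∀ M : Matrix (Fin n) (Fin n) ℝ, P13⁻¹ * (P13 * M) = M := by
    intro M; rw [← Matrix.mul_assoc, hP1, Matrix.one_mul]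
  have hP2' : ∀ M : Matrix (Fin n) (Fin n) ℝ, P13 * (P13⁻¹ * M) = M := by
    intro M; rw [← Matrix.mul_assoc, hP2, Matrix.one_mul]
  have hPT1' : ∀ M : Matrix (Fin n) (Fin n) ℝ, P13⁻¹ᵀ * (P13ᵀ * M) = M := by
    intro M; rw [← Matrix.mul_assoc, hPT1, Matrix.one_mul]
  have hPT2' : ∀ M : Matrix (Fin n) (Fin n) ℝ, P13ᵀ * (P13⁻¹ᵀ * M) = M := by
    intro M; rw [← Matrix.mul_assoc, hPT2, Matrix.one_mul]
  have hS1' : ∀ M : Matrix (Fin n) (Fin n) ℝ, Sh⁻¹ * (Sh * M) = M := by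
    intro M; rw [← Matrix.mul_assoc, hS1, Matrix.one_mul]
  have hS2' : ∀ M : Matrix (Fin n) (Fin n) ℝ, Sh * (Sh⁻¹ * M) = M := by
    intro M; rw [← Matrix.mul_assoc, hS2, Matrix.one_mul]
  set G : Matrix (Fin n) (Fin n) ℝ := P21 * P13⁻¹ with hG
  set D : Matrix (Fin n) (Fin n) ℝ := P13 + P13ᵀ - Sh with hD
  set X : Matrix (Fin n) (Fin n) ℝ := G * Sh * P13⁻¹ᵀ with hX
  set L : Matrix (Fin n) (Fin n) ℝ := X * (P13ᵀ - Sh) with hL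
  have psd2 : (L * Sh⁻¹ * Lᵀ).PosSemidef := by
    have h := (hSh.inv.posSemidef).mul_mul_conjTranspose_same L
    simpa [Matrix.conjTranspose_eq_transpose_of_trivial] using h
  set C : Matrix (Fin n ⊕ Fin n) (Fin n ⊕ Fin n) ℝ := fromBlocks 1 (-X) 0 1 with hC
  have hCH : Cᴴ = fromBlocks 1 0 (-X)ᵀ 1 := by
    rw [hC, Matrix.conjTranspose_eq_transpose_of_trivial, Matrix.fromBlocks_transpose]
    simp
  have psdTL : (Sv + (-X) * P21ᵀ + (P21 + (-X) * D) * (-X)ᵀ).PosSemidef := by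
    have h := (hblk.mul_mul_conjTranspose_same C).submatrix Sum.inl
    rw [hCH, hC, Matrix.fromBlocks_multiply, Matrix.fromBlocks_multiply] at h
    simp only [Matrix.one_mul, Matrix.mul_one, Matrix.zero_mul, Matrix.mul_zero,
      add_zero, zero_add] at h
    exact h
  have key : Sv - G * Sh * Gᵀ
      = (Sv + (-X) * P21ᵀ + (P21 + (-X) * D) * (-X)ᵀ) + L * Sh⁻¹ * Lᵀ := by
    rw [hL, hX, hD, hG]
    simp only [Matrix.transpose_mul, Matrix.transpose_sub, Matrix.transpose_add,
      Matrix.transpose_transpose, Matrix.transpose_neg, neg_neg, hSt, Matrix.mul_sub, Matrix.sub_mul, Matrix.mul_add,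
      Matrix.add_mul, Matrix.neg_mul, Matrix.mul_neg, Matrix.mul_assoc,
      hP1', hP2', hPT1', hPT2', hS1', hS2', hP1, hP2, hPT1, hPT2, hS1, hS2,
      Matrix.mul_one, Matrix.one_mul]
    abel
  rw [key]
  exact psdTL.add psd2
end

section
/- Let Π₅ be symmetric, R symmetric positive definite, K, Π₂₁, Π₁₃ matrices with Π₁₃ invertible, and Σ̄ˣ symmetric positive definite. If the block matrix [[Π₅, R^{1/2} K Π₂₁], [(R^{1/2} K Π₂₁)ᵀ, Π₁₃ + Π₁₃ᵀ − Σ̄ˣ]] is positive semidefinite, then with G = Π₂₁ Π₁₃⁻¹ we have Π₅ ⪰ R^{1/2} K G Σ̄ˣ Gᵀ Kᵀ R^{1/2}, and consequently trace(Π₅) ≥ trace(Kᵀ R K G Σ̄ˣ Gᵀ). -/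
/-!
Since `(Q - S)ᴴ S⁻¹ (Q - S) ⪰ 0`, the lower corner `Q + Qᴴ - S` of the block matrix is dominated
by `Qᴴ S⁻¹ Q`, so the block matrix stays positive semidefinite when that corner is replaced by
`Qᴴ S⁻¹ Q`. This corner is positive definite with inverse `Q⁻¹ S Q⁻ᴴ`, and the Schur complement
gives `A ⪰ B Q⁻¹ S (B Q⁻¹)ᴴ`. The trace bound follows by cyclicity, as `R = R^{1/2} R^{1/2}`.
-/

open Matrix

namespace Matrix

variable {m n 𝕜 : Type*} [Fintype m] [Fintype n] [DecidableEq n]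
  [Field 𝕜] [PartialOrder 𝕜] [StarRing 𝕜]

theorem PosSemidef.fromBlocks_zero₂₂ {E : Matrix n n 𝕜} (hE : E.PosSemidef) :
    (fromBlocks (0 : Matrix m m 𝕜) 0 0 E).PosSemidef := by
  simpa [conjTranspose_fromCols_eq_fromRows_conjTranspose, ← fromCols_fromRows_eq_fromBlocks]
    using hE.conjTranspose_mul_mul_same (fromCols (0 : Matrix n m 𝕜) (1 : Matrix n n 𝕜))

theorem PosSemidef.fromBlocks_mono₂₂ [StarOrderedRing 𝕜] {A : Matrix m m 𝕜} {B : Matrix m n 𝕜}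
    {D D' : Matrix n n 𝕜} (h : (fromBlocks A B Bᴴ D).PosSemidef) (hD : (D' - D).PosSemidef) :
    (fromBlocks A B Bᴴ D').PosSemidef := by
  simpa [fromBlocks_add] using h.add hD.fromBlocks_zero₂₂

theorem PosDef.posSemidef_conjTranspose_mul_inv_mul_sub {S : Matrix n n 𝕜} (hS : S.PosDef)
    (Q : Matrix n n 𝕜) : (Qᴴ * S⁻¹ * Q - (Q + Qᴴ - S)).PosSemidef := by
  have hSdet := (isUnit_iff_isUnit_det S).mp hS.isUnit
  convert hS.inv.posSemidef.conjTranspose_mul_mul_same (Q - S) using 1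
  simp only [conjTranspose_sub, hS.isHermitian.eq, Matrix.sub_mul, Matrix.mul_sub,
    Matrix.mul_assoc, mul_nonsing_inv S hSdet, nonsing_inv_mul S hSdet, Matrix.mul_one,
    Matrix.one_mul]
  abel

theorem PosSemidef.sub_mul_inv_mul_of_fromBlocks_add_sub [StarOrderedRing 𝕜]
    {A : Matrix m m 𝕜} {B : Matrix m n 𝕜} {Q S : Matrix n n 𝕜} (hQ : IsUnit Q) (hS : S.PosDef)
    (h : (fromBlocks A B Bᴴ (Q + Qᴴ - S)).PosSemidef) :
    (A - B * Q⁻¹ * S * (B * Q⁻¹)ᴴ).PosSemidef := by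
  have hQSQ : (Qᴴ * S⁻¹ * Q).PosDef :=
    hS.inv.conjTranspose_mul_mul_same (mulVec_injective_of_isUnit hQ)
  have := hQSQ.isUnit.invertible
  have hSdet := (isUnit_iff_isUnit_det S).mp hS.isUnit
  have hschur : (A - B * (Qᴴ * S⁻¹ * Q)⁻¹ * Bᴴ).PosSemidef :=
    (PosDef.fromBlocks₂₂ A B hQSQ).mp
      (h.fromBlocks_mono₂₂ (hS.posSemidef_conjTranspose_mul_inv_mul_sub Q))
  convert hschur using 2
  rw [Matrix.mul_inv_rev, Matrix.mul_inv_rev, nonsing_inv_nonsing_inv S hSdet,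
    conjTranspose_mul, conjTranspose_nonsing_inv]
  simp only [Matrix.mul_assoc]

end Matrix

theorem stmt_16_general {m n : ℕ} (P5 : Matrix (Fin m) (Fin m) ℝ)
    (R Rhalf : Matrix (Fin m) (Fin m) ℝ)
    (K : Matrix (Fin m) (Fin n) ℝ) (P21 P13 Sx : Matrix (Fin n) (Fin n) ℝ)
    (hRhalf : Rhalf.PosDef)
    (hRhalfsq : Rhalf * Rhalf = R) (hP13 : IsUnit P13) (hSx : Sx.PosDef)
    (hblk : (fromBlocks P5 (Rhalf * K * P21) (Rhalf * K * P21)ᵀ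
        (P13 + P13ᵀ - Sx)).PosSemidef) :
    (P5 - Rhalf * K * (P21 * P13⁻¹) * Sx * (P21 * P13⁻¹)ᵀ * Kᵀ * Rhalf).PosSemidef ∧
      (Kᵀ * R * K * (P21 * P13⁻¹) * Sx * (P21 * P13⁻¹)ᵀ).trace ≤ P5.trace := by
  set G := P21 * P13⁻¹
  have hRhalfT : Rhalfᵀ = Rhalf := hRhalf.isHermitian.eq
  have hbound : (P5 - Rhalf * K * G * Sx * Gᵀ * Kᵀ * Rhalf).PosSemidef := by
    simp only [← conjTranspose_eq_transpose_of_trivial] at hblk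
    have hfactor : Rhalf * K * P21 * P13⁻¹ * Sx * (Rhalf * K * P21 * P13⁻¹)ᴴ =
        Rhalf * K * G * Sx * Gᵀ * Kᵀ * Rhalf := by
      simp only [conjTranspose_eq_transpose_of_trivial, transpose_mul, hRhalfT, G,
        Matrix.mul_assoc]
    simpa only [hfactor] using hblk.sub_mul_inv_mul_of_fromBlocks_add_sub hP13 hSx
  have htrace : (Kᵀ * R * K * G * Sx * Gᵀ).trace =
      (Rhalf * K * G * Sx * Gᵀ * Kᵀ * Rhalf).trace := by
    rw [← hRhalfsq]
    simpa only [Matrix.mul_assoc] using trace_mul_comm (Kᵀ * Rhalf) (Rhalf * K * G * Sx * Gᵀ)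
  have htrace_nonneg := hbound.trace_nonneg
  rw [trace_sub] at htrace_nonneg
  exact ⟨hbound, by linarith⟩

/-- LMI reformulation of the LQR constraint: if
`[[P5, R^{1/2} K P21], [(R^{1/2} K P21)ᵀ, P13 + P13ᵀ − Sx]] ⪰ 0` with `P5` symmetric,
`R ≻ 0` with positive definite square root `Rhalf`, `P13` invertible, and `Sx ≻ 0`
symmetric, then with `G = P21 P13⁻¹` we have `P5 ⪰ R^{1/2} K G Sx Gᵀ Kᵀ R^{1/2}`, and
consequently `trace(P5) ≥ trace(Kᵀ R K G Sx Gᵀ)`.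
(`P5`, `P21`, `P13` play the roles of `Π₅`, `Π₂₁`, `Π₁₃`, and `Sx` that of `Σ̄ˣ`.) -/
theorem stmt_16 {m n : ℕ} (P5 : Matrix (Fin m) (Fin m) ℝ)
    (R Rhalf : Matrix (Fin m) (Fin m) ℝ)
    (K : Matrix (Fin m) (Fin n) ℝ) (P21 P13 Sx : Matrix (Fin n) (Fin n) ℝ)
    (hP5 : P5.IsHermitian) (hR : R.PosDef) (hRhalf : Rhalf.PosDef)
    (hRhalfsq : Rhalf * Rhalf = R) (hP13 : IsUnit P13) (hSx : Sx.PosDef)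
    (hblk : (fromBlocks P5 (Rhalf * K * P21) (Rhalf * K * P21)ᵀ
        (P13 + P13ᵀ - Sx)).PosSemidef) :
    (P5 - Rhalf * K * (P21 * P13⁻¹) * Sx * (P21 * P13⁻¹)ᵀ * Kᵀ * Rhalf).PosSemidef ∧
      (Kᵀ * R * K * (P21 * P13⁻¹) * Sx * (P21 * P13⁻¹)ᵀ).trace ≤ P5.trace :=
  stmt_16_general P5 R Rhalf K P21 P13 Sx hRhalf hRhalfsq hP13 hSx hblk
end
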